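/- arXiv:1911.00241 — 6 statements merged into one kernel-verified Lean document; each statement's English description precedes it below -/
import Mathlib

section
/- There is no linear isometry from the complex space ℓ₁² into the compact operators S_∞ on ℓ₂; that is, there do not exist compact operators T, S on ℓ₂ with ‖z₁T + z₂S‖ = |z₁| + |z₂| for all z₁, z₂ ∈ ℂ. -/
noncomputable section

/-- `ℓ₂`, the complex Hilbert sequence space. -/
abbrev H : Type := lp (fun _ : ℕ => ℂ) 2

/-!
For unimodular `μ` we have `‖T + μ • S‖ = 2 = ‖T‖ + ‖S‖`, so on vectors `x` nearly norming
`T + μ • S` both `T x ≈ μ • S x` (parallelogram law) and `S† S x ≈ x`; thus every unimodular `μ`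
is an approximate eigenvalue of the compact contraction `A = S† T`, hence an eigenvalue.
Unimodular eigenvectors of a contraction are also eigenvectors of its adjoint, so those for
distinct eigenvalues are orthogonal. The unit circle is infinite, and `A` would then map
infinitely many unit vectors to points pairwise `√2` apart, which compactness forbids.
-/

open ContinuousLinearMap Module End Metric
open scoped InnerProductSpace

namespace IsCompactOperator

variable {𝕜 X Y : Type*} [NontriviallyNormedField 𝕜] [NormedAddCommGroup X] [NormedSpace 𝕜 X]
  [NormedAddCommGroup Y] [NormedSpace 𝕜 Y]

theorem hasEigenvalue_of_forall_exists_norm_sub_smul_lt {T : X →L[𝕜] X}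
    (hT : IsCompactOperator T) {μ : 𝕜} (hμ : μ ≠ 0)
    (h : ∀ c > 0, ∃ x, ‖T x - μ • x‖ < c * ‖x‖) : HasEigenvalue (T : End 𝕜 X) μ := by
  by_contra hne
  obtain ⟨c, hc, hbound⟩ :=
    antilipschitzWith_iff_exists_mul_le_norm.mp (antilipschitz_of_not_hasEigenvalue hT hμ hne)
  obtain ⟨x, hx⟩ := h c hc
  exact (hbound x).not_gt (by simpa using hx)

theorem exists_ne_dist_apply_lt {ι : Type*} [Infinite ι] {T : X →L[𝕜] Y}
    (hT : IsCompactOperator T) {x : ι → X} {R : ℝ} (hx : ∀ i, ‖x i‖ ≤ R) {δ : ℝ} (hδ : 0 < δ) :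
    ∃ i j, i ≠ j ∧ dist (T (x i)) (T (x j)) < δ := by
  obtain ⟨K, hK, hTK⟩ := hT.image_closedBall_subset_compact R
  let e := Infinite.natEmbedding ι
  obtain ⟨_, -, φ, hφ, hlim⟩ :=
    hK.tendsto_subseq fun n ↦ hTK ⟨x (e n), mem_closedBall_zero_iff.mpr (hx _), rfl⟩
  obtain ⟨N, hN⟩ := Metric.cauchySeq_iff'.mp hlim.cauchySeq δ hδ
  exact ⟨e (φ (N + 1)), e (φ N), by simp [hφ.injective.eq_iff], hN (N + 1) (by omega)⟩

end IsCompactOperator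

theorem ContinuousLinearMap.exists_mul_norm_lt_apply_of_lt_opNorm {𝕜 E F : Type*}
    [DenselyNormedField 𝕜] [NormedAddCommGroup E] [NormedSpace 𝕜 E]
    [SeminormedAddCommGroup F] [NormedSpace 𝕜 F] (f : E →L[𝕜] F) {r : ℝ} (hr₀ : 0 ≤ r)
    (hr : r < ‖f‖) : ∃ x, r * ‖x‖ < ‖f x‖ := by
  obtain ⟨x, hx, hfx⟩ := f.exists_lt_apply_of_lt_opNorm hr
  exact ⟨x, (mul_le_of_le_one_right hr₀ hx.le).trans_lt hfx⟩

theorem Module.End.HasEigenvalue.exists_norm_eq_one_apply_eq_smul {𝕜 E : Type*} [RCLike 𝕜]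
    [NormedAddCommGroup E] [NormedSpace 𝕜 E] {f : End 𝕜 E} {μ : 𝕜} (hμ : f.HasEigenvalue μ) :
    ∃ y, ‖y‖ = 1 ∧ f y = μ • y := by
  obtain ⟨v, hv⟩ := hμ.exists_hasEigenvector
  refine ⟨(‖v‖⁻¹ : 𝕜) • v, norm_smul_inv_norm hv.2, ?_⟩
  rw [map_smul, hv.apply_eq_smul, smul_comm]

namespace ContinuousLinearMap

variable {𝕜 E : Type*} [RCLike 𝕜] [NormedAddCommGroup E] [InnerProductSpace 𝕜 E] [CompleteSpace E]

theorem norm_adjoint_apply_apply_sub_sq_le {A : E →L[𝕜] E} (hA : ‖A‖ ≤ 1) (x : E) :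
    ‖adjoint A (A x) - x‖ ^ 2 ≤ ‖x‖ ^ 2 - ‖A x‖ ^ 2 := by
  have hAA : ‖adjoint A (A x)‖ ≤ ‖A x‖ :=
    (adjoint A).le_of_opNorm_le (by rwa [LinearIsometryEquiv.norm_map]) _ |>.trans_eq (one_mul _)
  have hre : RCLike.re ⟪adjoint A (A x), x⟫_𝕜 = ‖A x‖ ^ 2 := by
    rw [adjoint_inner_left, inner_self_eq_norm_sq (𝕜 := 𝕜)]
  rw [norm_sub_sq (𝕜 := 𝕜), hre]
  nlinarith [norm_nonneg (adjoint A (A x))]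

theorem adjoint_apply_eq_of_apply_eq_smul {A : E →L[𝕜] E} (hA : ‖A‖ ≤ 1) {μ : 𝕜} (hμ : ‖μ‖ = 1)
    {y : E} (hy : A y = μ • y) : adjoint A y = star μ • y := by
  have h := norm_adjoint_apply_apply_sub_sq_le hA y
  rw [hy, norm_smul, hμ, one_mul, sub_self] at h
  have h0 : adjoint A (μ • y) = y := sub_eq_zero.mp (by simpa using h.antisymm (sq_nonneg _))
  calc adjoint A y = μ⁻¹ • adjoint A (μ • y) := by
        rw [map_smul, inv_smul_smul₀ (norm_ne_zero_iff.mp (hμ.trans_ne one_ne_zero))]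
    _ = star μ • y := by rw [h0, RCLike.inv_eq_conj hμ]; rfl

theorem inner_eq_zero_of_apply_eq_smul {A : E →L[𝕜] E} (hA : ‖A‖ ≤ 1) {μ ν : 𝕜} (hμ : ‖μ‖ = 1)
    (hμν : μ ≠ ν) {y z : E} (hy : A y = μ • y) (hz : A z = ν • z) : ⟪y, z⟫_𝕜 = 0 := by
  have h : μ * ⟪y, z⟫_𝕜 = ν * ⟪y, z⟫_𝕜 := calc
    μ * ⟪y, z⟫_𝕜 = ⟪adjoint A y, z⟫_𝕜 := by
      rw [adjoint_apply_eq_of_apply_eq_smul hA hμ hy, inner_smul_left, RCLike.star_def,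
        RCLike.conj_conj]
    _ = ν * ⟪y, z⟫_𝕜 := by rw [adjoint_inner_left, hz, inner_smul_right]
  have h0 : (μ - ν) * ⟪y, z⟫_𝕜 = 0 := by rw [sub_mul, h, sub_self]
  exact (mul_eq_zero.mp h0).resolve_left (sub_ne_zero.mpr hμν)

theorem norm_adjoint_apply_sub_smul_sq_le {T S : E →L[𝕜] E} (hT : ‖T‖ ≤ 1) (hS : ‖S‖ ≤ 1)
    {μ : 𝕜} (hμ : ‖μ‖ = 1) (x : E) :
    ‖adjoint S (T x) - μ • x‖ ^ 2 ≤ 4 * (4 * ‖x‖ ^ 2 - ‖T x + μ • S x‖ ^ 2) := by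
  have hTx : ‖T x‖ ≤ ‖x‖ := T.le_of_opNorm_le hT x |>.trans_eq (one_mul _)
  have hSx : ‖S x‖ ≤ ‖x‖ := S.le_of_opNorm_le hS x |>.trans_eq (one_mul _)
  have hμSx : ‖μ • S x‖ = ‖S x‖ := by rw [norm_smul, hμ, one_mul]
  have hsum : ‖T x + μ • S x‖ ≤ ‖x‖ + ‖S x‖ := (norm_add_le _ _).trans (by rw [hμSx]; linarith)
  have hdiff : ‖adjoint S (T x - μ • S x)‖ ^ 2 ≤ 4 * ‖x‖ ^ 2 - ‖T x + μ • S x‖ ^ 2 := by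
    have hadj : ‖adjoint S (T x - μ • S x)‖ ≤ ‖T x - μ • S x‖ :=
      (adjoint S).le_of_opNorm_le (by rwa [LinearIsometryEquiv.norm_map]) _ |>.trans_eq (one_mul _)
    have hpar := parallelogram_law_with_norm 𝕜 (T x) (μ • S x)
    rw [hμSx] at hpar
    nlinarith [pow_le_pow_left₀ (norm_nonneg _) hadj 2, pow_le_pow_left₀ (norm_nonneg _) hTx 2,
      pow_le_pow_left₀ (norm_nonneg _) hSx 2]
  have hSS : ‖μ • (adjoint S (S x) - x)‖ ^ 2 ≤ 4 * ‖x‖ ^ 2 - ‖T x + μ • S x‖ ^ 2 := by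
    rw [norm_smul, hμ, one_mul]
    nlinarith [norm_adjoint_apply_apply_sub_sq_le hS x, norm_nonneg (S x),
      norm_nonneg (T x + μ • S x)]
  have hsplit :
      adjoint S (T x) - μ • x = adjoint S (T x - μ • S x) + μ • (adjoint S (S x) - x) := by
    rw [map_sub, map_smul, smul_sub]
    abel
  rw [hsplit]
  nlinarith [pow_le_pow_left₀ (norm_nonneg _) (norm_add_le (adjoint S (T x - μ • S x))
    (μ • (adjoint S (S x) - x))) 2,
    sq_nonneg (‖adjoint S (T x - μ • S x)‖ - ‖μ • (adjoint S (S x) - x)‖)]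

theorem forall_exists_norm_adjoint_comp_apply_sub_smul_lt {T S : E →L[𝕜] E} (hT : ‖T‖ ≤ 1)
    (hS : ‖S‖ ≤ 1) {μ : 𝕜} (hμ : ‖μ‖ = 1) (h2 : ‖T + μ • S‖ = 2) :
    ∀ c > 0, ∃ x, ‖(adjoint S ∘L T) x - μ • x‖ < c * ‖x‖ := by
  intro c hc
  obtain ⟨r, hr₀, hr₂, hr⟩ : ∃ r : ℝ, 0 ≤ r ∧ r < 2 ∧ 4 - c ^ 2 / 4 ≤ r ^ 2 := by
    rcases le_total 0 (2 - c ^ 2 / 16) with h | h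
    · exact ⟨2 - c ^ 2 / 16, h, by linarith [pow_pos hc 2], by nlinarith⟩
    · exact ⟨0, le_rfl, two_pos, by nlinarith⟩
  obtain ⟨x, hx⟩ := (T + μ • S).exists_mul_norm_lt_apply_of_lt_opNorm hr₀ (h2 ▸ hr₂)
  refine ⟨x, ?_⟩
  rw [add_apply, smul_apply] at hx
  have hbound := norm_adjoint_apply_sub_smul_sq_le hT hS hμ x
  have hrx : 0 ≤ r * ‖x‖ := mul_nonneg hr₀ (norm_nonneg x)
  have hsq : (r * ‖x‖) ^ 2 < ‖T x + μ • S x‖ ^ 2 := pow_lt_pow_left₀ hx hrx two_ne_zero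
  rw [comp_apply]
  refine lt_of_pow_lt_pow_left₀ 2 (by positivity) ?_
  nlinarith [sq_nonneg ‖x‖]

theorem _root_.IsCompactOperator.hasEigenvalue_adjoint_comp {T S : E →L[𝕜] E}
    (hTc : IsCompactOperator T) (hT : ‖T‖ ≤ 1) (hS : ‖S‖ ≤ 1) {μ : 𝕜} (hμ : ‖μ‖ = 1)
    (h2 : ‖T + μ • S‖ = 2) : HasEigenvalue (adjoint S ∘L T : End 𝕜 E) μ :=
  (hTc.clm_comp (adjoint S)).hasEigenvalue_of_forall_exists_norm_sub_smul_lt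
    (norm_ne_zero_iff.mp (hμ.trans_ne one_ne_zero))
    (forall_exists_norm_adjoint_comp_apply_sub_smul_lt hT hS hμ h2)

end ContinuousLinearMap

/-- There is no linear isometry from the complex `ℓ₁²` into the compact operators on `ℓ₂`:
there are no compact `T, S` with `‖z₁T + z₂S‖ = |z₁| + |z₂|` for all `z₁, z₂ ∈ ℂ`. -/
theorem stmt_5 :
    ¬ ∃ T S : H →L[ℂ] H, IsCompactOperator T ∧ IsCompactOperator S ∧
      ∀ z₁ z₂ : ℂ, ‖z₁ • T + z₂ • S‖ = ‖z₁‖ + ‖z₂‖ := by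
  rintro ⟨T, S, hT, -, h⟩
  have hT₁ : ‖T‖ = 1 := by simpa using h 1 0
  have hS₁ : ‖S‖ = 1 := by simpa using h 0 1
  set A := adjoint S ∘L T
  have hA : IsCompactOperator A := hT.clm_comp (adjoint S)
  have hA₁ : ‖A‖ ≤ 1 :=
    (opNorm_comp_le _ _).trans_eq (by rw [LinearIsometryEquiv.norm_map, hS₁, hT₁, one_mul])
  have hsphere (μ : sphere (0 : ℂ) 1) : ‖(μ : ℂ)‖ = 1 := mem_sphere_zero_iff_norm.mp μ.2
  have eigen (μ : sphere (0 : ℂ) 1) : ∃ y : H, ‖y‖ = 1 ∧ A y = (μ : ℂ) • y := by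
    have h₂ : ‖T + (μ : ℂ) • S‖ = 2 := by
      rw [← one_smul ℂ T, h, hsphere, norm_one, one_add_one_eq_two]
    exact (hT.hasEigenvalue_adjoint_comp hT₁.le hS₁.le (hsphere μ) h₂)
      |>.exists_norm_eq_one_apply_eq_smul
  choose y hy₁ hyA using eigen
  have : Infinite (sphere (0 : ℂ) 1) :=
    ((isPreconnected_sphere (by simp [Complex.rank_real_complex]) 0 1).infinite_of_nontrivial
      ⟨1, by simp, -1, by simp, by norm_num⟩).to_subtype
  obtain ⟨μ, ν, hμν, hlt⟩ := hA.exists_ne_dist_apply_lt (fun μ ↦ (hy₁ μ).le) one_pos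
  have horth : ⟪y μ, y ν⟫_ℂ = 0 :=
    inner_eq_zero_of_apply_eq_smul hA₁ (hsphere μ) (Subtype.coe_ne_coe.mpr hμν) (hyA μ) (hyA ν)
  have hdist : ‖(μ : ℂ) • y μ - (ν : ℂ) • y ν‖ ^ 2 = 2 := by
    rw [@norm_sub_sq ℂ, inner_smul_left, inner_smul_right, horth, norm_smul, norm_smul,
      hsphere, hsphere, hy₁, hy₁]
    norm_num
  rw [hyA, hyA, dist_eq_norm] at hlt
  nlinarith [norm_nonneg ((μ : ℂ) • y μ - (ν : ℂ) • y ν)]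
end
end

section
/- For m ≥ 2, there is no linear isometry from the complex space ℓ₁^m into the compact operators S_∞ on ℓ₂. -/
/-!
Let `A`, `B` be the images of two distinct unit vectors of `ℓ₁^m`, so that `‖A + ω • B‖ = 2` for
every unimodular `ω`. A compact operator attains its norm, and equality in
`‖(A + ω • B) x‖ ≤ ‖A x‖ + ‖B x‖ ≤ 2 ‖x‖` forces `A† A x = x` and `B† A x = ω x`. Hence every
unimodular `ω` is an eigenvalue of `B† A` with an eigenvector in the `1`-eigenspace of the compact
operator `A† A`. That eigenspace is finite-dimensional and eigenvectors for distinct eigenvalues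
are linearly independent, so only finitely many `ω` can occur.
-/

noncomputable section

open ContinuousLinearMap Module.End

variable {𝕜 : Type*} [RCLike 𝕜] {E : Type*} [NormedAddCommGroup E] [InnerProductSpace 𝕜 E]

theorem ContinuousLinearMap.IsPositive.norm_mem_spectrum [Nontrivial E] {S : E →L[𝕜] E}
    (hS : S.IsPositive) : algebraMap ℝ 𝕜 ‖S‖ ∈ spectrum 𝕜 S := by
  by_contra h
  obtain ⟨ε, hε, hle⟩ := S.rayleighQuotient_le_of_norm_mem_resolventSet (spectrum.notMem_iff.mp h)
  have habs (x : E) : |S.rayleighQuotient x| ≤ ‖S‖ - ε := by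
    rw [rayleighQuotient, reApplyInnerSelf_apply,
      abs_of_nonneg (div_nonneg (hS.re_inner_nonneg_left x) (by positivity))]
    exact hle x
  linarith [ciSup_le habs, S.norm_eq_iSup_rayleighQuotient hS.isSymmetric]

variable [CompleteSpace E] {F : Type*} [NormedAddCommGroup F] [InnerProductSpace 𝕜 F]
  [CompleteSpace F]

theorem IsCompactOperator.exists_norm_apply_eq_opNorm_mul_norm [Nontrivial E] {T : E →L[𝕜] F}
    (hT : IsCompactOperator T) : ∃ x ≠ 0, ‖T x‖ = ‖T‖ * ‖x‖ := by
  rcases eq_or_ne T 0 with rfl | hT0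
  · obtain ⟨x, hx⟩ := exists_ne (0 : E)
    exact ⟨x, hx, by simp⟩
  -- The norm is attained at an eigenvector of `T† T` for the eigenvalue `‖T† T‖ = ‖T‖ ^ 2`.
  set S := adjoint T ∘L T
  have hμ : algebraMap ℝ 𝕜 ‖S‖ ≠ 0 := by simpa [S, norm_adjoint_comp_self] using hT0
  obtain ⟨x, hSx, hx⟩ :=
    (((hT.clm_comp (adjoint T)).hasEigenvalue_iff_mem_spectrum hμ).mpr
      T.isPositive_adjoint_comp_self.norm_mem_spectrum).exists_hasEigenvector
  refine ⟨x, hx, (pow_left_inj₀ (norm_nonneg _) (by positivity) two_ne_zero).mp ?_⟩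
  calc ‖T x‖ ^ 2 = RCLike.re (inner 𝕜 (S x) x) := by
        rw [coe_comp, Function.comp_apply, adjoint_inner_left, inner_self_eq_norm_sq]
    _ = ‖S‖ * ‖x‖ ^ 2 := by
        rw [show S x = _ from mem_eigenspace_iff.mp hSx, inner_smul_left,
          RCLike.algebraMap_eq_ofReal, RCLike.conj_ofReal, RCLike.re_ofReal_mul,
          inner_self_eq_norm_sq]
    _ = (‖T‖ * ‖x‖) ^ 2 := by rw [norm_adjoint_comp_self]; ring

theorem ContinuousLinearMap.adjoint_apply_apply_eq_self_of_norm_apply_eq {C : E →L[𝕜] F}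
    (hC : ‖C‖ ≤ 1) {x : E} (hx : ‖C x‖ = ‖x‖) : adjoint C (C x) = x := by
  have hre : RCLike.re (inner 𝕜 (adjoint C (C x)) x) = ‖x‖ ^ 2 := by
    rw [adjoint_inner_left, inner_self_eq_norm_sq, hx]
  have hle : ‖adjoint C (C x)‖ ≤ ‖x‖ :=
    calc ‖adjoint C (C x)‖ ≤ ‖adjoint C‖ * ‖C x‖ := le_opNorm _ _
      _ ≤ 1 * ‖C x‖ := by gcongr; rwa [LinearIsometryEquiv.norm_map]
      _ = ‖x‖ := by rw [one_mul, hx]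
  have hsq : ‖adjoint C (C x) - x‖ ^ 2 ≤ 0 := by
    rw [norm_sub_sq (𝕜 := 𝕜), hre]
    nlinarith [norm_nonneg (adjoint C (C x))]
  exact sub_eq_zero.mp (norm_eq_zero.mp (by nlinarith [norm_nonneg (adjoint C (C x) - x)]))

theorem ContinuousLinearMap.adjoint_apply_eq_of_norm_add_smul_apply_eq {A B : E →L[𝕜] F}
    (hA : ‖A‖ ≤ 1) (hB : ‖B‖ ≤ 1) {ω : 𝕜} (hω : ‖ω‖ = 1) {x : E}
    (hx : ‖(A + ω • B) x‖ = 2 * ‖x‖) :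
    adjoint A (A x) = x ∧ adjoint B (A x) = ω • x := by
  have hAx : ‖A x‖ ≤ ‖x‖ := by simpa using A.le_of_opNorm_le hA x
  have hBx : ‖ω • B x‖ ≤ ‖x‖ := by
    rw [norm_smul, hω, one_mul]
    simpa using B.le_of_opNorm_le hB x
  rw [add_apply, smul_apply] at hx
  have htri : ‖A x + ω • B x‖ ≤ ‖A x‖ + ‖ω • B x‖ := norm_add_le _ _
  have hAx' : ‖A x‖ = ‖x‖ := by linarith
  have hωBx : ‖ω • B x‖ = ‖x‖ := by linarith
  have hBx' : ‖B x‖ = ‖x‖ := by rwa [norm_smul, hω, one_mul] at hωBx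
  have hAB : A x = ω • B x := by
    have hpar := parallelogram_law_with_norm 𝕜 (A x) (ω • B x)
    rw [hx, hAx', hωBx] at hpar
    exact sub_eq_zero.mp (norm_eq_zero.mp (by nlinarith [norm_nonneg (A x - ω • B x)]))
  refine ⟨adjoint_apply_apply_eq_self_of_norm_apply_eq hA hAx', ?_⟩
  rw [hAB, map_smul, adjoint_apply_apply_eq_self_of_norm_apply_eq hB hBx']

theorem Module.End.finite_setOf_hasEigenvector_mem {K V : Type*} [Field K] [AddCommGroup V]
    [Module K V] (f : End K V) (W : Submodule K V) [FiniteDimensional K W] :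
    {μ | ∃ x ∈ W, f.HasEigenvector μ x}.Finite := by
  set s := {μ | ∃ x ∈ W, f.HasEigenvector μ x}
  choose x hxW hx using fun μ : s ↦ μ.2
  have hli : LinearIndependent K (fun μ ↦ ⟨x μ, hxW μ⟩ : s → W) :=
    .of_comp W.subtype (f.eigenvectors_linearIndependent s x hx)
  exact Set.finite_coe_iff.mp hli.finite

theorem IsCompactOperator.finite_setOf_norm_add_smul_eq_two [Nontrivial E] {A B : E →L[𝕜] F}
    (hA : IsCompactOperator A) (hB : IsCompactOperator B) (hA1 : ‖A‖ ≤ 1) (hB1 : ‖B‖ ≤ 1) :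
    {ω : 𝕜 | ‖ω‖ = 1 ∧ ‖A + ω • B‖ = 2}.Finite := by
  have : FiniteDimensional 𝕜 (eigenspace (adjoint A ∘L A).toLinearMap 1) :=
    finite_dimensional_eigenspace (hA.clm_comp (adjoint A)) 1 one_ne_zero
  refine (finite_setOf_hasEigenvector_mem (adjoint B ∘L A).toLinearMap
    (eigenspace (adjoint A ∘L A).toLinearMap 1)).subset ?_
  rintro ω ⟨hω, hnorm⟩
  obtain ⟨x, hx0, hx⟩ := (hA.add (hB.smul ω)).exists_norm_apply_eq_opNorm_mul_norm (T := A + ω • B)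
  rw [hnorm] at hx
  obtain ⟨hAA, hBA⟩ := adjoint_apply_eq_of_norm_add_smul_apply_eq hA1 hB1 hω hx
  exact ⟨x, mem_eigenspace_iff.mpr (by simpa using hAA), mem_eigenspace_iff.mpr hBA, hx0⟩

theorem Complex.infinite_sphere {r : ℝ} (hr : 0 < r) : (Metric.sphere (0 : ℂ) r).Infinite :=
  (isPreconnected_sphere (by simp [Complex.rank_real_complex]) 0 r).infinite_of_nontrivial
    ⟨r, by simp [hr.le], -r, by simp [hr.le], by rw [Ne, self_eq_neg]; exact_mod_cast hr.ne'⟩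

theorem PiLp.norm_toLp_single_add_single_of_L1 {ι β : Type*} [Fintype ι] [DecidableEq ι]
    [SeminormedAddCommGroup β] {i j : ι} (hij : i ≠ j) (a b : β) :
    ‖WithLp.toLp 1 (Pi.single i a + Pi.single j b : ι → β)‖ = ‖a‖ + ‖b‖ := by
  rw [PiLp.norm_eq_of_L1, Finset.sum_eq_add_of_mem i j (Finset.mem_univ _) (Finset.mem_univ _) hij]
  · simp [hij, hij.symm]
  · intro k _ hk
    simp [hk.1, hk.2]

/-- For `m ≥ 2`, there is no linear isometry from the complex `ℓ₁^m` into the space of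
compact operators on `ℓ₂`. -/
theorem stmt_6 (m : ℕ) (hm : 2 ≤ m) :
    ¬ ∃ Φ : PiLp 1 (fun _ : Fin m => ℂ) →ₗ[ℂ] (H →L[ℂ] H),
      (∀ v, IsCompactOperator (Φ v)) ∧ ∀ v, ‖Φ v‖ = ‖v‖ := by
  rintro ⟨Φ, hcomp, hiso⟩
  have : Nontrivial H := nontrivial_of_ne (lp.single 2 0 1) 0
    (ne_of_apply_ne (fun f : H ↦ f 0) (by simp))
  obtain ⟨i, j, hij⟩ := (Fin.nontrivial_iff_two_le.mpr hm).exists_pair_ne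
  set e : Fin m → PiLp 1 (fun _ : Fin m => ℂ) := fun k ↦ WithLp.toLp 1 (Pi.single k 1)
  have he (k : Fin m) : ‖Φ (e k)‖ = 1 := by simp [e, hiso]
  have hsum (ω : ℂ) : ‖Φ (e i) + ω • Φ (e j)‖ = 1 + ‖ω‖ := by
    have : e i + ω • e j = WithLp.toLp 1 (Pi.single i 1 + Pi.single j ω) := by
      ext k
      simp [e, Pi.single_apply]
    rw [← map_smul, ← map_add, hiso, this, PiLp.norm_toLp_single_add_single_of_L1 hij, norm_one]
  refine Complex.infinite_sphere one_pos (((hcomp (e i)).finite_setOf_norm_add_smul_eq_two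
    (hcomp (e j)) (he i).le (he j).le).subset fun ω hω ↦ ?_)
  rw [mem_sphere_zero_iff_norm] at hω
  exact ⟨hω, by rw [hsum, hω]; norm_num⟩
end
end

section
/- Let 2 < p < ∞ and suppose Φ: ℓ_p² → B(ℓ₂) defined by Φ(z₁,z₂) = z₁T + z₂S is a linear isometry. Then neither T nor S is a compact operator. -/
noncomputable section

/-!
Write `K = {x | T* T x = x}`; for a contraction `T` these are exactly the vectors on which `T`
is isometric. Since `‖T + tS‖² ≤ 1 + |t|^p` with `p > 2`, the parallelogram law applied to
`Tf ± tSf` gives `t² ‖Sf‖² ≤ t^p ‖f‖²` for `f ∈ K`, hence `S` vanishes on `K`; the same argument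
for the adjoints shows that `S*` vanishes on `T K`. If `T` is compact, `T` attains its norm on
`Kᗮ`, which forces `‖T r‖ ≤ μ ‖r‖` on `Kᗮ` for some `μ < 1`. Splitting `v = f + r` along
`K ⊕ Kᗮ` then gives `‖T + (1 - μ) S‖ ≤ 1`, whereas the isometry says that this norm is
`(1 + (1 - μ)^p)^{1/p} > 1`.
-/

open Filter Topology ContinuousLinearMap
open scoped InnerProductSpace

namespace Real

theorem nonpos_of_forall_sq_mul_le_rpow_mul {p a b : ℝ} (hp : 2 < p)
    (h : ∀ t : ℝ, 0 < t → t ^ 2 * a ≤ t ^ p * b) : a ≤ 0 := by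
  have hbound : ∀ t : ℝ, 0 < t → a ≤ t ^ (p - 2) * b := by
    intro t ht
    have h2 : t ^ p = t ^ 2 * t ^ (p - 2) := by
      rw [← rpow_natCast, ← rpow_add ht]
      norm_num
    have := h t ht
    rw [h2, mul_assoc] at this
    exact le_of_mul_le_mul_left this (by positivity)
  have hlim : Tendsto (fun t : ℝ => t ^ (p - 2) * b) (𝓝[>] 0) (𝓝 0) := by
    have := ((continuous_rpow_const (by linarith : 0 ≤ p - 2)).tendsto 0).mul_const b
    rw [zero_rpow (by linarith), zero_mul] at this
    exact tendsto_nhdsWithin_of_tendsto_nhds this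
  exact ge_of_tendsto hlim (eventually_nhdsWithin_of_forall hbound)

theorem rpow_one_div_sq_le {a p : ℝ} (ha : 1 ≤ a) (hp : 2 ≤ p) : (a ^ (1 / p)) ^ 2 ≤ a := by
  have hp0 : 0 < p := by linarith
  rw [← rpow_natCast, ← rpow_mul (by linarith)]
  calc a ^ (1 / p * (2 : ℕ)) ≤ a ^ (1 : ℝ) := by
        apply rpow_le_rpow_of_exponent_le ha
        rw [Nat.cast_ofNat, one_div_mul_eq_div, div_le_one hp0]
        exact hp
    _ = a := rpow_one a

end Real

variable {𝕜 E : Type*} [RCLike 𝕜] [NormedAddCommGroup E] [InnerProductSpace 𝕜 E]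

namespace ContinuousLinearMap

theorem apply_eq_zero_of_norm_apply_eq {p : ℝ} (hp : 2 < p) {T S : E →L[𝕜] E}
    (hTS : ∀ t : ℝ, ‖T + (t : 𝕜) • S‖ ^ 2 ≤ 1 + |t| ^ p) {f : E} (hf : ‖T f‖ = ‖f‖) :
    S f = 0 := by
  have hline : ∀ s : ℝ, ‖T f + (s : 𝕜) • S f‖ ^ 2 ≤ (1 + |s| ^ p) * ‖f‖ ^ 2 := fun s =>
    calc ‖T f + (s : 𝕜) • S f‖ ^ 2 = ‖(T + (s : 𝕜) • S) f‖ ^ 2 := rfl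
      _ ≤ (‖T + (s : 𝕜) • S‖ * ‖f‖) ^ 2 := by gcongr; exact le_opNorm _ _
      _ ≤ (1 + |s| ^ p) * ‖f‖ ^ 2 := by rw [mul_pow]; gcongr; exact hTS s
  have hsq : ‖S f‖ ^ 2 ≤ 0 := by
    refine Real.nonpos_of_forall_sq_mul_le_rpow_mul (b := ‖f‖ ^ 2) hp fun t ht => ?_
    have hpar := parallelogram_law_with_norm 𝕜 (T f) ((t : 𝕜) • S f)
    have hplus := hline t
    have hminus := hline (-t)
    rw [abs_of_pos ht] at hplus
    rw [abs_neg, abs_of_pos ht, RCLike.ofReal_neg, neg_smul, ← sub_eq_add_neg] at hminus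
    rw [norm_smul, RCLike.norm_ofReal, abs_of_pos ht, hf] at hpar
    nlinarith
  simpa using hsq

end ContinuousLinearMap

variable [CompleteSpace E]

namespace ContinuousLinearMap

theorem adjoint_add_ofReal_smul (T S : E →L[𝕜] E) (t : ℝ) :
    adjoint (T + (t : 𝕜) • S) = adjoint T + (t : 𝕜) • adjoint S := by
  simp [map_smulₛₗ]

theorem norm_apply_eq_of_adjoint_apply_apply_eq {T : E →L[𝕜] E} {x : E}
    (hx : adjoint T (T x) = x) : ‖T x‖ = ‖x‖ := by
  have h : ‖T x‖ ^ 2 = ‖x‖ ^ 2 := by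
    rw [← inner_self_eq_norm_sq (𝕜 := 𝕜), ← adjoint_inner_left, hx, inner_self_eq_norm_sq]
  exact (sq_eq_sq₀ (norm_nonneg _) (norm_nonneg _)).1 h

def isometricSubspace (T : E →L[𝕜] E) : Submodule 𝕜 E :=
  LinearMap.ker ((adjoint T ∘L T - 1 : E →L[𝕜] E) : E →ₗ[𝕜] E)

variable {T : E →L[𝕜] E} {x : E}

theorem mem_isometricSubspace : x ∈ T.isometricSubspace ↔ adjoint T (T x) = x := by
  simp [isometricSubspace, sub_eq_zero]

instance : CompleteSpace T.isometricSubspace :=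
  (isClosed_ker (adjoint T ∘L T - 1 : E →L[𝕜] E)).completeSpace_coe

theorem mem_isometricSubspace_of_norm_apply_eq (hT : ‖T‖ ≤ 1) (hx : ‖T x‖ = ‖x‖) :
    x ∈ T.isometricSubspace := by
  have hle : ‖adjoint T (T x)‖ ≤ ‖x‖ :=
    calc ‖adjoint T (T x)‖ ≤ ‖adjoint T‖ * ‖T x‖ := le_opNorm _ _
      _ ≤ 1 * ‖x‖ := by rw [adjoint.norm_map, hx]; gcongr
      _ = ‖x‖ := one_mul _
  have hre : RCLike.re ⟪adjoint T (T x), x⟫_𝕜 = ‖x‖ ^ 2 := by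
    rw [adjoint_inner_left, inner_self_eq_norm_sq, hx]
  have hdist : ‖adjoint T (T x) - x‖ ^ 2 ≤ 0 := by
    rw [@norm_sub_sq 𝕜, hre]
    nlinarith [norm_nonneg (adjoint T (T x))]
  rw [mem_isometricSubspace, ← sub_eq_zero, ← norm_eq_zero]
  exact pow_eq_zero_iff two_ne_zero |>.1 (le_antisymm hdist (sq_nonneg _))

theorem norm_add_ofReal_smul_le_one {K : Submodule 𝕜 E}
    [K.HasOrthogonalProjection] {T S : E →L[𝕜] E} (hS : ‖S‖ ≤ 1)
    (hK : ∀ f ∈ K, adjoint T (T f) = f) (hSK : ∀ f ∈ K, S f = 0)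
    (hSTK : ∀ f ∈ K, adjoint S (T f) = 0) {μ t : ℝ} (hTK : ∀ r ∈ Kᗮ, ‖T r‖ ≤ μ * ‖r‖)
    (ht : 0 ≤ t) (hμt : μ + t ≤ 1) : ‖T + (t : 𝕜) • S‖ ≤ 1 := by
  refine opNorm_le_bound _ zero_le_one fun v => ?_
  obtain ⟨f, hf, r, hr, rfl⟩ := K.exists_add_mem_mem_orthogonal v
  have hfr : ⟪f, r⟫_𝕜 = 0 := Submodule.inner_right_of_mem_orthogonal hf hr
  have happly : (T + (t : 𝕜) • S) (f + r) = T f + (T r + (t : 𝕜) • S r) := by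
    simp only [add_apply, smul_apply, map_add, hSK f hf, smul_zero]
    abel
  have horth : ⟪T f, T r + (t : 𝕜) • S r⟫_𝕜 = 0 := by
    rw [inner_add_right, inner_smul_right, ← adjoint_inner_left, hK f hf, ← adjoint_inner_left,
      hSTK f hf, hfr, inner_zero_left, mul_zero, add_zero]
  have hrest : ‖T r + (t : 𝕜) • S r‖ ≤ ‖r‖ :=
    calc ‖T r + (t : 𝕜) • S r‖ ≤ ‖T r‖ + t * ‖S r‖ := by
          refine (norm_add_le _ _).trans_eq ?_
          rw [norm_smul, RCLike.norm_of_nonneg ht]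
      _ ≤ μ * ‖r‖ + t * ‖r‖ := by
          gcongr
          · exact hTK r hr
          · exact (S.le_opNorm r).trans (mul_le_of_le_one_left (norm_nonneg _) hS)
      _ ≤ ‖r‖ := by nlinarith [norm_nonneg r]
  rw [one_mul, happly, mul_self_le_mul_self_iff (norm_nonneg _) (norm_nonneg _),
    norm_add_sq_eq_norm_sq_add_norm_sq_of_inner_eq_zero _ _ horth,
    norm_add_sq_eq_norm_sq_add_norm_sq_of_inner_eq_zero _ _ hfr,
    norm_apply_eq_of_adjoint_apply_apply_eq (hK f hf)]
  gcongr

end ContinuousLinearMap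

theorem IsCompactOperator.exists_norm_eq_one_of_opNorm_eq_one {F : Type*} [NormedAddCommGroup F]
    [InnerProductSpace 𝕜 F] [CompleteSpace F] {A : E →L[𝕜] F}
    (hA : IsCompactOperator A) (hA1 : ‖A‖ = 1) : ∃ u : E, ‖u‖ = 1 ∧ ‖A u‖ = 1 := by
  have hnorming : ∀ n : ℕ, ∃ x : E, ‖x‖ < 1 ∧ 1 - 1 / ((n : ℝ) + 1) < ‖A x‖ := fun n =>
    A.exists_lt_apply_of_lt_opNorm <| by
      rw [hA1]; linarith [show (0 : ℝ) < 1 / ((n : ℝ) + 1) by positivity]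
  choose x hx1 hAx using hnorming
  have hAx_tendsto : Tendsto (fun n => ‖A (x n)‖) atTop (𝓝 1) := by
    refine tendsto_of_tendsto_of_tendsto_of_le_of_le ?_ tendsto_const_nhds (fun n => (hAx n).le)
      fun n => ?_
    · simpa using tendsto_one_div_add_atTop_nhds_zero_nat.const_sub (1 : ℝ)
    · exact (A.le_opNorm _).trans (by rw [hA1, one_mul]; exact (hx1 n).le)
  have hmem : ∀ n, A (x n) ∈ closure (A '' Metric.closedBall 0 1) := fun n =>
    subset_closure ⟨x n, mem_closedBall_zero_iff.2 (hx1 n).le, rfl⟩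
  obtain ⟨y, -, φ, hφ, hy⟩ := (hA.isCompact_closure_image_closedBall 1).tendsto_subseq hmem
  have hy1 : ‖y‖ = 1 := tendsto_nhds_unique hy.norm (hAx_tendsto.comp hφ.tendsto_atTop)
  -- The norm is attained at `A* y`; no weak compactness of the unit ball is needed.
  set u := adjoint A y
  have hu_le : ‖u‖ ≤ 1 := by
    simpa [hA1, hy1] using (adjoint A).le_opNorm y
  have hinner : Tendsto (fun n => RCLike.re ⟪u, x (φ n)⟫_𝕜) atTop (𝓝 1) := by
    have := RCLike.continuous_re.continuousAt.tendsto.comp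
      ((tendsto_const_nhds (x := y)).inner (𝕜 := 𝕜) hy)
    simp only [Function.comp_def, inner_self_eq_norm_sq_to_K, hy1] at this
    simpa [u, adjoint_inner_left] using this
  have hu_ge : 1 ≤ ‖u‖ := le_of_tendsto hinner (Eventually.of_forall fun n =>
    (re_inner_le_norm _ _).trans (mul_le_of_le_one_right (norm_nonneg _) (hx1 (φ n)).le))
  have hu1 : ‖u‖ = 1 := le_antisymm hu_le hu_ge
  refine ⟨u, hu1, le_antisymm (by simpa [hA1, hu1] using A.le_opNorm u) ?_⟩
  calc 1 = RCLike.re ⟪u, u⟫_𝕜 := by rw [inner_self_eq_norm_sq, hu1, one_pow]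
    _ = RCLike.re ⟪y, A u⟫_𝕜 := by rw [adjoint_inner_left]
    _ ≤ ‖y‖ * ‖A u‖ := re_inner_le_norm _ _
    _ = ‖A u‖ := by rw [hy1, one_mul]

theorem IsCompactOperator.exists_lt_one_norm_apply_le_of_mem_orthogonal {T : E →L[𝕜] E}
    (hT : IsCompactOperator T) (hT1 : ‖T‖ ≤ 1) :
    ∃ μ < 1, ∀ r ∈ T.isometricSubspaceᗮ, ‖T r‖ ≤ μ * ‖r‖ := by
  set K := T.isometricSubspace
  set A : Kᗮ →L[𝕜] E := T ∘L Kᗮ.subtypeL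
  refine ⟨‖A‖, lt_of_le_of_ne ?_ fun hA1 => ?_, fun r hr => A.le_opNorm ⟨r, hr⟩⟩
  · exact (opNorm_comp_le _ _).trans
      (mul_le_one₀ hT1 (norm_nonneg _) (Submodule.norm_subtypeL_le _))
  obtain ⟨u, hu1, hAu⟩ := (hT.comp_clm Kᗮ.subtypeL).exists_norm_eq_one_of_opNorm_eq_one hA1
  have huK : (u : E) ∈ K := mem_isometricSubspace_of_norm_apply_eq hT1 (hAu.trans hu1.symm)
  have hu0 : (u : E) = 0 := Submodule.disjoint_def.1 K.orthogonal_disjoint _ huK u.2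
  simp [hu0] at hu1

theorem not_isCompactOperator_of_forall_norm_smul_add_smul_eq {p : ℝ} (hp : 2 < p)
    {T S : E →L[𝕜] E}
    (hTS : ∀ z₁ z₂ : 𝕜, ‖z₁ • T + z₂ • S‖ = (‖z₁‖ ^ p + ‖z₂‖ ^ p) ^ (1 / p)) :
    ¬ IsCompactOperator T := by
  intro hT
  have hp0 : p ≠ 0 := by positivity
  have hT1 : ‖T‖ = 1 := by simpa [hp0] using hTS 1 0
  have hS1 : ‖S‖ = 1 := by simpa [hp0] using hTS 0 1
  have hline : ∀ t : ℝ, ‖T + (t : 𝕜) • S‖ = (1 + |t| ^ p) ^ (1 / p) := fun t => by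
    simpa using hTS 1 t
  have hsq : ∀ t : ℝ, ‖T + (t : 𝕜) • S‖ ^ 2 ≤ 1 + |t| ^ p := fun t =>
    hline t ▸ Real.rpow_one_div_sq_le (le_add_of_nonneg_right (by positivity)) hp.le
  have hsq_adj : ∀ t : ℝ, ‖adjoint T + (t : 𝕜) • adjoint S‖ ^ 2 ≤ 1 + |t| ^ p := fun t => by
    rw [← adjoint_add_ofReal_smul, adjoint.norm_map]; exact hsq t
  obtain ⟨μ, hμ1, hμ⟩ := hT.exists_lt_one_norm_apply_le_of_mem_orthogonal hT1.le
  have hK : ∀ f ∈ T.isometricSubspace, adjoint T (T f) = f := fun f hf =>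
    mem_isometricSubspace.1 hf
  have hTK : ∀ f ∈ T.isometricSubspace, ‖T f‖ = ‖f‖ := fun f hf =>
    norm_apply_eq_of_adjoint_apply_apply_eq (hK f hf)
  have hle := norm_add_ofReal_smul_le_one hS1.le hK
    (fun f hf => apply_eq_zero_of_norm_apply_eq hp hsq (hTK f hf))
    (fun f hf => apply_eq_zero_of_norm_apply_eq hp hsq_adj (by rw [hK f hf, hTK f hf]))
    hμ (sub_nonneg.2 hμ1.le) (add_sub_cancel μ 1).le
  rw [hline] at hle
  have hgt : 1 < (1 + |1 - μ| ^ p) ^ (1 / p) :=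
    Real.one_lt_rpow (lt_add_of_pos_right _ (by positivity)) (by positivity)
  linarith

/-- Let `2 < p < ∞`. If `Φ(z₁,z₂) = z₁T + z₂S` is a linear isometry from `ℓ_p²` into
`B(ℓ₂)`, then neither `T` nor `S` is compact. -/
theorem stmt_7 (p : ℝ) (hp : 2 < p) (T S : H →L[ℂ] H)
    (hiso : ∀ z₁ z₂ : ℂ,
      ‖z₁ • T + z₂ • S‖ = (‖z₁‖ ^ p + ‖z₂‖ ^ p) ^ (1 / p)) :
    ¬ IsCompactOperator T ∧ ¬ IsCompactOperator S :=
  ⟨not_isCompactOperator_of_forall_norm_smul_add_smul_eq hp hiso,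
    not_isCompactOperator_of_forall_norm_smul_add_smul_eq hp fun z₁ z₂ => by
      rw [add_comm, hiso, add_comm]⟩
end
end

section
/- There do not exist 2×2 complex matrices T, S with ‖z₁T + z₂S‖_p = |z₁| + |z₂| for all z₁, z₂ ∈ ℂ, where ‖·‖_p denotes the Schatten p-norm with 1 < p < ∞; that is, ℓ₁² does not embed isometrically into S_p². -/
/-!
For `1 < p < ∞` the `ℓᵖ` and `ℓ²` norms on `ℝ²` are within a factor `2 ^ |1/p - 1/2| < √2` of
each other, so applied to singular values the Schatten `p`-norm on `2 × 2` matrices is within that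
factor of the Schatten `2`-norm, i.e. of the Frobenius norm, which obeys the parallelogram law.
In an isometric copy of `ℓ₁²` the matrices `T`, `S`, `T + S`, `T - S` have norms `1, 1, 2, 2`,
violating the parallelogram law by a factor `2` that such a comparison cannot absorb.
-/

noncomputable section

/-- The singular values of a complex `m × m` matrix: square roots of the eigenvalues of
`Aᴴ * A`. -/
noncomputable def singVals {m : ℕ} (A : Matrix (Fin m) (Fin m) ℂ) : Fin m → ℝ :=
  fun i => Real.sqrt ((Matrix.isHermitian_conjTranspose_mul_self A).eigenvalues i)

/-- The Schatten `p`-norm of a complex `m × m` matrix: `(∑ sᵢ(A)^p)^(1/p)` where `sᵢ(A)`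
are the singular values, i.e. `(Tr |A|^p)^(1/p)`. -/
noncomputable def schattenNormMat (p : ℝ) {m : ℕ} (A : Matrix (Fin m) (Fin m) ℂ) : ℝ :=
  (∑ i, singVals A i ^ p) ^ (1 / p)

open Finset

section LpComparison

variable {ι : Type*} (s : Finset ι) {f : ι → ℝ}

theorem sum_rpow_le_rpow_sum (hf : ∀ i ∈ s, 0 ≤ f i) {r : ℝ} (hr : 1 ≤ r) :
    ∑ i ∈ s, f i ^ r ≤ (∑ i ∈ s, f i) ^ r := by
  have split : ∀ x : ℝ, 0 ≤ x → x ^ r = x * x ^ (r - 1) := fun x hx => by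
    rw [← Real.rpow_one_add' hx (by linarith), add_sub_cancel]
  have hsum : 0 ≤ ∑ i ∈ s, f i := sum_nonneg hf
  calc ∑ i ∈ s, f i ^ r = ∑ i ∈ s, f i * f i ^ (r - 1) :=
        sum_congr rfl fun i hi => split _ (hf i hi)
    _ ≤ ∑ i ∈ s, f i * (∑ j ∈ s, f j) ^ (r - 1) := by
        gcongr with i hi
        · exact hf i hi
        · exact hf i hi
        · exact single_le_sum hf hi
    _ = (∑ i ∈ s, f i) ^ r := by rw [← sum_mul, ← split _ hsum]

theorem sum_rpow_rpow_inv_le_of_le (hf : ∀ i ∈ s, 0 ≤ f i) {q r : ℝ} (hq : 0 < q)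
    (hqr : q ≤ r) : (∑ i ∈ s, f i ^ r) ^ (1 / r) ≤ (∑ i ∈ s, f i ^ q) ^ (1 / q) := by
  have hr : 0 < r := hq.trans_le hqr
  have hpow : ∑ i ∈ s, (f i ^ q) ^ (r / q) = ∑ i ∈ s, f i ^ r :=
    sum_congr rfl fun i hi => by rw [← Real.rpow_mul (hf i hi), mul_div_cancel₀ _ hq.ne']
  have h := sum_rpow_le_rpow_sum s (f := fun i => f i ^ q)
    (fun i hi => Real.rpow_nonneg (hf i hi) q) ((one_le_div hq).2 hqr)
  rw [hpow] at h
  have hsum : 0 ≤ ∑ i ∈ s, f i ^ q := sum_nonneg fun i hi => Real.rpow_nonneg (hf i hi) q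
  calc (∑ i ∈ s, f i ^ r) ^ (1 / r) ≤ ((∑ i ∈ s, f i ^ q) ^ (r / q)) ^ (1 / r) := by
        gcongr
        exact sum_nonneg fun i hi => Real.rpow_nonneg (hf i hi) r
    _ = (∑ i ∈ s, f i ^ q) ^ (1 / q) := by
        rw [← Real.rpow_mul hsum]; congr 1; field_simp

theorem sum_rpow_rpow_inv_le_card_rpow_mul (hf : ∀ i ∈ s, 0 ≤ f i) {q r : ℝ} (hq : 0 < q)
    (hqr : q ≤ r) : (∑ i ∈ s, f i ^ q) ^ (1 / q) ≤
      (#s : ℝ) ^ (1 / q - 1 / r) * (∑ i ∈ s, f i ^ r) ^ (1 / r) := by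
  have hr : 0 < r := hq.trans_le hqr
  have hpow : ∑ i ∈ s, (f i ^ q) ^ (r / q) = ∑ i ∈ s, f i ^ r :=
    sum_congr rfl fun i hi => by rw [← Real.rpow_mul (hf i hi), mul_div_cancel₀ _ hq.ne']
  have h := Real.rpow_sum_le_const_mul_sum_rpow_of_nonneg s (f := fun i => f i ^ q)
    ((one_le_div hq).2 hqr) (fun i hi => Real.rpow_nonneg (hf i hi) q)
  rw [hpow] at h
  have hsum : 0 ≤ ∑ i ∈ s, f i ^ q := sum_nonneg fun i hi => Real.rpow_nonneg (hf i hi) q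
  have hcard : (0 : ℝ) ≤ #s := Nat.cast_nonneg _
  calc (∑ i ∈ s, f i ^ q) ^ (1 / q) = ((∑ i ∈ s, f i ^ q) ^ (r / q)) ^ (1 / r) := by
        rw [← Real.rpow_mul hsum]; congr 1; field_simp
    _ ≤ ((#s : ℝ) ^ (r / q - 1) * ∑ i ∈ s, f i ^ r) ^ (1 / r) := by gcongr
    _ = (#s : ℝ) ^ (1 / q - 1 / r) * (∑ i ∈ s, f i ^ r) ^ (1 / r) := by
        rw [Real.mul_rpow (Real.rpow_nonneg hcard _)
          (sum_nonneg fun i hi => Real.rpow_nonneg (hf i hi) r), ← Real.rpow_mul hcard]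
        congr 2; field_simp

end LpComparison

lemma two_rpow_sq_lt_two {x : ℝ} (hx : x < 1 / 2) : ((2 : ℝ) ^ x) ^ 2 < 2 := by
  rw [← Real.rpow_natCast, ← Real.rpow_mul zero_le_two]
  calc (2 : ℝ) ^ (x * (2 : ℕ)) < 2 ^ (1 : ℝ) :=
        Real.rpow_lt_rpow_of_exponent_lt one_lt_two (by push_cast; linarith)
    _ = 2 := Real.rpow_one 2

section Schatten

variable {m : ℕ}

lemma singVals_nonneg (A : Matrix (Fin m) (Fin m) ℂ) (i : Fin m) : 0 ≤ singVals A i :=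
  Real.sqrt_nonneg _

lemma schattenNormMat_nonneg (p : ℝ) (A : Matrix (Fin m) (Fin m) ℂ) :
    0 ≤ schattenNormMat p A :=
  Real.rpow_nonneg (sum_nonneg fun i _ => Real.rpow_nonneg (singVals_nonneg A i) p) _

lemma schattenNormMat_le_of_le {q r : ℝ} (hq : 0 < q) (hqr : q ≤ r)
    (A : Matrix (Fin m) (Fin m) ℂ) : schattenNormMat r A ≤ schattenNormMat q A :=
  sum_rpow_rpow_inv_le_of_le _ (fun i _ => singVals_nonneg A i) hq hqr

lemma schattenNormMat_le_rpow_mul {q r : ℝ} (hq : 0 < q) (hqr : q ≤ r)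
    (A : Matrix (Fin m) (Fin m) ℂ) :
    schattenNormMat q A ≤ (m : ℝ) ^ (1 / q - 1 / r) * schattenNormMat r A := by
  rw [schattenNormMat, schattenNormMat]
  simpa only [card_univ, Fintype.card_fin] using
    sum_rpow_rpow_inv_le_card_rpow_mul univ (fun i _ => singVals_nonneg A i) hq hqr

lemma sum_singVals_sq (A : Matrix (Fin m) (Fin m) ℂ) :
    ∑ i, singVals A i ^ (2 : ℝ) = ∑ i, ∑ j, Complex.normSq (A i j) := by
  have hA := Matrix.isHermitian_conjTranspose_mul_self A
  have hsq : ∀ i, singVals A i ^ (2 : ℝ) = hA.eigenvalues i := fun i => by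
    rw [Real.rpow_two, singVals, Real.sq_sqrt (Matrix.eigenvalues_conjTranspose_mul_self_nonneg A i)]
  have htrace : (A.conjTranspose * A).trace = ∑ i, ∑ j, (Complex.normSq (A i j) : ℂ) := by
    rw [Finset.sum_comm]
    simp [Matrix.trace, Matrix.mul_apply, Complex.normSq_eq_conj_mul_self]
  simp_rw [hsq]
  have h := hA.trace_eq_sum_eigenvalues.symm.trans htrace
  apply Complex.ofReal_injective
  push_cast
  simpa using h

lemma schattenNormMat_two_sq (A : Matrix (Fin m) (Fin m) ℂ) :
    schattenNormMat 2 A ^ 2 = ∑ i, ∑ j, Complex.normSq (A i j) := by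
  rw [schattenNormMat, sum_singVals_sq, ← Real.sqrt_eq_rpow, Real.sq_sqrt]
  exact sum_nonneg fun i _ => sum_nonneg fun j _ => Complex.normSq_nonneg _

lemma schattenNormMat_two_parallelogram (T S : Matrix (Fin m) (Fin m) ℂ) :
    schattenNormMat 2 (T + S) ^ 2 + schattenNormMat 2 (T - S) ^ 2 =
      2 * schattenNormMat 2 T ^ 2 + 2 * schattenNormMat 2 S ^ 2 := by
  simp only [schattenNormMat_two_sq, Matrix.add_apply, Matrix.sub_apply, Complex.normSq_add,
    Complex.normSq_sub, mul_sum, ← sum_add_distrib]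
  refine sum_congr rfl fun i _ => sum_congr rfl fun j _ => ?_
  ring

lemma no_l1_isometry_of_schattenNormMat_comparable_two {p a b : ℝ} (hab : (a * b) ^ 2 < 2)
    (hp2 : ∀ A : Matrix (Fin m) (Fin m) ℂ, schattenNormMat p A ≤ a * schattenNormMat 2 A)
    (h2p : ∀ A : Matrix (Fin m) (Fin m) ℂ, schattenNormMat 2 A ≤ b * schattenNormMat p A)
    (T S : Matrix (Fin m) (Fin m) ℂ) :
    ¬ ∀ z₁ z₂ : ℂ, schattenNormMat p (z₁ • T + z₂ • S) = ‖z₁‖ + ‖z₂‖ := by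
  intro h
  set F := schattenNormMat (m := m) 2
  have hT : schattenNormMat p T = 1 := by simpa using h 1 0
  have hS : schattenNormMat p S = 1 := by simpa using h 0 1
  have hadd : schattenNormMat p (T + S) = 2 := by
    simpa [one_add_one_eq_two] using h 1 1
  have hsub : schattenNormMat p (T - S) = 2 := by
    simpa [← sub_eq_add_neg, one_add_one_eq_two] using h 1 (-1)
  have hlarge : ∀ A, schattenNormMat p A = 2 → 4 ≤ (a * F A) ^ 2 := fun A hA => by
    have := hp2 A
    rw [hA] at this
    nlinarith
  have hsmall : ∀ A, schattenNormMat p A = 1 → F A ^ 2 ≤ b ^ 2 := fun A hA => by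
    have := h2p A
    rw [hA, mul_one] at this
    exact pow_le_pow_left₀ (schattenNormMat_nonneg 2 A) this 2
  have : 8 ≤ 4 * (a * b) ^ 2 := calc
    8 ≤ (a * F (T + S)) ^ 2 + (a * F (T - S)) ^ 2 := by
        linarith [hlarge _ hadd, hlarge _ hsub]
    _ = a ^ 2 * (2 * F T ^ 2 + 2 * F S ^ 2) := by
        rw [← schattenNormMat_two_parallelogram]; ring
    _ ≤ a ^ 2 * (2 * b ^ 2 + 2 * b ^ 2) :=
        mul_le_mul_of_nonneg_left (by linarith [hsmall T hT, hsmall S hS]) (sq_nonneg a)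
    _ = 4 * (a * b) ^ 2 := by ring
  linarith

end Schatten

/-- For `1 < p < ∞`, there are no `2 × 2` complex matrices `T, S` with
`‖z₁T + z₂S‖_p = |z₁| + |z₂|` for all `z₁, z₂ ∈ ℂ`; i.e. `ℓ₁²` does not embed
isometrically into `S_p²`. -/
theorem stmt_10 (p : ℝ) (hp1 : 1 < p) :
    ¬ ∃ T S : Matrix (Fin 2) (Fin 2) ℂ,
      ∀ z₁ z₂ : ℂ, schattenNormMat p (z₁ • T + z₂ • S) = ‖z₁‖ + ‖z₂‖ := by
  rintro ⟨T, S, h⟩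
  have hp : 0 < p := by linarith
  rcases le_total p 2 with hp2 | hp2
  · refine no_l1_isometry_of_schattenNormMat_comparable_two (a := 2 ^ (1 / p - 1 / 2)) (b := 1) ?_
      (fun A => by exact_mod_cast schattenNormMat_le_rpow_mul hp hp2 A)
      (fun A => by simpa using schattenNormMat_le_of_le hp hp2 A) T S h
    rw [mul_one]
    exact two_rpow_sq_lt_two (by have := (div_lt_one hp).2 hp1; linarith)
  · refine no_l1_isometry_of_schattenNormMat_comparable_two (a := 1) (b := 2 ^ (1 / 2 - 1 / p)) ?_
      (fun A => by simpa using schattenNormMat_le_of_le two_pos hp2 A)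
      (fun A => by exact_mod_cast schattenNormMat_le_rpow_mul two_pos hp2 A) T S h
    rw [one_mul]
    exact two_rpow_sq_lt_two (by have := one_div_pos.2 hp; linarith)
end
end

section
/- Let T₁, S₁ be bounded operators on ℓ₂ whose matrices (with respect to the standard basis) have block form T₁ = [[1, 0],[0, T₂]] and S₁ = [[1, 0],[0, S₂]] (first row and column equal to e₁ direction with entry 1 and zeros elsewhere). If ‖z₁T₁ + z₂S₁‖ = |z₁| + |z₂| for all z₁, z₂ ∈ ℂ, then ‖z₁T₂ + z₂S₂‖ = |z₁| + |z₂| for all z₁, z₂ ∈ ℂ. -/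
noncomputable section

/-- `ℂ ⊕₂ ℓ₂`, the Hilbert space decomposition `ℓ₂ = ℂe₁ ⊕ e₁^⊥`. -/
abbrev H1 : Type := WithLp 2 (ℂ × H)

/-!
The norm of a block-diagonal operator on an `L²` product is the maximum of the norms of its
blocks, so `‖z₁T₁ + z₂S₁‖ = max (|z₁ + z₂|, ‖z₁T₂ + z₂S₂‖)`. Wherever the triangle inequality
`|z₁ + z₂| ≤ |z₁| + |z₂|` is strict, the hypothesis therefore forces
`‖z₁T₂ + z₂S₂‖ = |z₁| + |z₂|`. Such pairs are dense in `ℂ²` (they include all pairs with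
`Im (z₁ z̄₂) ≠ 0`), and both sides are continuous in `(z₁, z₂)`.
-/

open ComplexConjugate

section BlockDiagonal

variable {𝕜 E F E' F' : Type*} [NontriviallyNormedField 𝕜]
  [SeminormedAddCommGroup E] [NormedSpace 𝕜 E] [SeminormedAddCommGroup F] [NormedSpace 𝕜 F]
  [SeminormedAddCommGroup E'] [NormedSpace 𝕜 E'] [SeminormedAddCommGroup F'] [NormedSpace 𝕜 F']

theorem ContinuousLinearMap.opNorm_eq_max_of_apply_toLp_prod
    {R : WithLp 2 (E × F) →L[𝕜] WithLp 2 (E' × F')} {A : E →L[𝕜] E'} {B : F →L[𝕜] F'}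
    (hR : ∀ x y, R (WithLp.toLp 2 (x, y)) = WithLp.toLp 2 (A x, B y)) :
    ‖R‖ = max ‖A‖ ‖B‖ := by
  apply le_antisymm
  · refine R.opNorm_le_bound (by positivity) fun v => ?_
    have hA := (A.le_opNorm v.fst).trans
      (mul_le_mul_of_nonneg_right (le_max_left _ ‖B‖) (norm_nonneg _))
    have hB := (B.le_opNorm v.snd).trans
      (mul_le_mul_of_nonneg_right (le_max_right ‖A‖ _) (norm_nonneg _))
    rw [← sq_le_sq₀ (norm_nonneg _) (by positivity), mul_pow,
      WithLp.prod_norm_sq_eq_of_L2 v]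
    calc ‖R v‖ ^ 2 = ‖WithLp.toLp 2 (A v.fst, B v.snd)‖ ^ 2 := by rw [← hR]; rfl
      _ = ‖A v.fst‖ ^ 2 + ‖B v.snd‖ ^ 2 := WithLp.prod_norm_sq_eq_of_L2 _
      _ ≤ (max ‖A‖ ‖B‖ * ‖v.fst‖) ^ 2 + (max ‖A‖ ‖B‖ * ‖v.snd‖) ^ 2 := by gcongr
      _ = _ := by ring
  · refine max_le (A.opNorm_le_bound (norm_nonneg _) fun x => ?_)
      (B.opNorm_le_bound (norm_nonneg _) fun y => ?_)
    · calc ‖A x‖ = ‖R (WithLp.toLp 2 (x, 0))‖ := by rw [hR, map_zero, WithLp.norm_toLp_fst]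
        _ ≤ ‖R‖ * ‖x‖ := (R.le_opNorm _).trans_eq (by rw [WithLp.norm_toLp_fst])
    · calc ‖B y‖ = ‖R (WithLp.toLp 2 (0, y))‖ := by rw [hR, map_zero, WithLp.norm_toLp_snd]
        _ ≤ ‖R‖ * ‖y‖ := (R.le_opNorm _).trans_eq (by rw [WithLp.norm_toLp_snd])

end BlockDiagonal

namespace Complex

theorem norm_add_lt_of_im_mul_conj_ne_zero {x y : ℂ} (h : (x * conj y).im ≠ 0) :
    ‖x + y‖ < ‖x‖ + ‖y‖ := by
  have hre : (x * conj y).re < ‖x‖ * ‖y‖ := by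
    calc (x * conj y).re ≤ |(x * conj y).re| := le_abs_self _
      _ < ‖x * conj y‖ := abs_re_lt_norm.2 h
      _ = ‖x‖ * ‖y‖ := by rw [norm_mul, norm_conj]
  refine lt_of_pow_lt_pow_left₀ 2 (by positivity) ?_
  rw [Complex.sq_norm, normSq_add, normSq_eq_norm_sq, normSq_eq_norm_sq]
  nlinarith

theorem dense_setOf_im_mul_conj_ne_zero :
    Dense {p : ℂ × ℂ | (p.1 * conj p.2).im ≠ 0} := by
  set φ : ℂ × ℂ → ℝ := fun p => (p.1 * conj p.2).im
  refine Metric.dense_iff.2 fun p ε hε => ?_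
  set v : ℂ × ℂ := ((ε / 2 : ℝ), (ε / 2 : ℝ) * I)
  have hφv : φ v = -(ε / 2) ^ 2 := by simp [φ, v]; ring
  -- `φ` is a real quadratic form with `φ v ≠ 0`; by the parallelogram law it cannot vanish at
  -- all three of `p`, `p + v`, `p - v`.
  have hpar : φ (p + v) + φ (p - v) = 2 * φ p + 2 * φ v := by
    simp only [φ, Prod.fst_add, Prod.snd_add, Prod.fst_sub, Prod.snd_sub,
      mul_im, add_re, add_im, sub_re, sub_im, conj_re, conj_im]
    ring
  have hv : ‖v‖ < ε := by
    rw [Prod.norm_def]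
    simp [v, abs_of_pos hε]
    linarith
  by_contra hempty
  have hzero : ∀ q ∈ Metric.ball p ε, φ q = 0 := fun q hq =>
    not_not.1 fun hq' => hempty ⟨q, hq, hq'⟩
  have h0 := hzero p (Metric.mem_ball_self hε)
  have h1 := hzero (p + v) (by simpa [dist_eq_norm] using hv)
  have h2 := hzero (p - v) (by simpa [dist_eq_norm] using hv)
  nlinarith

end Complex

section BlockPencil

variable {𝕜 E : Type*} [NontriviallyNormedField 𝕜] [SeminormedAddCommGroup E] [NormedSpace 𝕜 E]
  {T₁ S₁ : WithLp 2 (𝕜 × E) →L[𝕜] WithLp 2 (𝕜 × E)} {T₂ S₂ : E →L[𝕜] E}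

theorem norm_smul_add_smul_eq_max_of_block
    (hT : ∀ (a : 𝕜) (ζ : E), T₁ ((WithLp.equiv 2 (𝕜 × E)).symm (a, ζ)) =
      (WithLp.equiv 2 (𝕜 × E)).symm (a, T₂ ζ))
    (hS : ∀ (a : 𝕜) (ζ : E), S₁ ((WithLp.equiv 2 (𝕜 × E)).symm (a, ζ)) =
      (WithLp.equiv 2 (𝕜 × E)).symm (a, S₂ ζ)) (z₁ z₂ : 𝕜) :
    ‖z₁ • T₁ + z₂ • S₁‖ = max ‖z₁ + z₂‖ ‖z₁ • T₂ + z₂ • S₂‖ := by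
  rw [ContinuousLinearMap.opNorm_eq_max_of_apply_toLp_prod
      (A := (z₁ + z₂) • ContinuousLinearMap.id 𝕜 𝕜) (B := z₁ • T₂ + z₂ • S₂),
    norm_smul, ContinuousLinearMap.norm_id, mul_one]
  intro a ζ
  have hT' := hT a ζ
  have hS' := hS a ζ
  simp only [WithLp.equiv_symm_apply] at hT' hS'
  simp [hT', hS', ← WithLp.toLp_smul, ← WithLp.toLp_add, add_mul]

end BlockPencil

/-- If `T₁ = [[1,0],[0,T₂]]` and `S₁ = [[1,0],[0,S₂]]` in block form with respect to
`ℓ₂ = ℂe₁ ⊕ e₁^⊥`, and `‖z₁T₁ + z₂S₁‖ = |z₁| + |z₂|` for all `z₁, z₂ ∈ ℂ`, then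
`‖z₁T₂ + z₂S₂‖ = |z₁| + |z₂|` for all `z₁, z₂ ∈ ℂ`. -/
theorem stmt_13 (T₁ S₁ : H1 →L[ℂ] H1) (T₂ S₂ : H →L[ℂ] H)
    (hT : ∀ (a : ℂ) (ζ : H), T₁ ((WithLp.equiv 2 (ℂ × H)).symm (a, ζ)) =
      (WithLp.equiv 2 (ℂ × H)).symm (a, T₂ ζ))
    (hS : ∀ (a : ℂ) (ζ : H), S₁ ((WithLp.equiv 2 (ℂ × H)).symm (a, ζ)) =
      (WithLp.equiv 2 (ℂ × H)).symm (a, S₂ ζ))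
    (hiso : ∀ z₁ z₂ : ℂ, ‖z₁ • T₁ + z₂ • S₁‖ = ‖z₁‖ + ‖z₂‖) :
    ∀ z₁ z₂ : ℂ, ‖z₁ • T₂ + z₂ • S₂‖ = ‖z₁‖ + ‖z₂‖ := by
  have hgeneric : Set.EqOn (fun p : ℂ × ℂ => ‖p.1 • T₂ + p.2 • S₂‖)
      (fun p => ‖p.1‖ + ‖p.2‖) {p | (p.1 * conj p.2).im ≠ 0} := by
    rintro ⟨z₁, z₂⟩ hp
    have hlt := Complex.norm_add_lt_of_im_mul_conj_ne_zero hp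
    have hmax : max ‖z₁ + z₂‖ ‖z₁ • T₂ + z₂ • S₂‖ = ‖z₁‖ + ‖z₂‖ := by
      rw [← norm_smul_add_smul_eq_max_of_block hT hS, hiso]
    exact ((max_eq_iff.1 hmax).resolve_left fun h => hlt.ne h.1).1
  have hext := Continuous.ext_on Complex.dense_setOf_im_mul_conj_ne_zero
    (by fun_prop) (by fun_prop) hgeneric
  exact fun z₁ z₂ => congrFun hext (z₁, z₂)
end
end

section
/- Let 2 < p < ∞ and c > 0. Then there do not exist operators T, S ∈ B(ℓ₂) and a unit vector ζ with ‖Tζ‖ = 1, ‖Sζ‖ = c, ⟨Tζ, Sζ⟩ = 0, and ‖z₁T + z₂S‖ = (|z₁|^p + |z₂|^p)^{1/p} for all z₁, z₂ ∈ ℂ. Equivalently: the inequality (t^p + 1)^{2/p} ≥ t² + c² for all t ≥ 0 is impossible when 2 < p < ∞ and c > 0. -/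
noncomputable section

local notation "⟪" x ", " y "⟫" => @inner ℂ _ _ x y

/-! Testing `z₁ = t`, `z₂ = 1` on `ζ` gives `√(t² + c²) ≤ (t^p + 1)^(1/p)` by orthogonality of
`Tζ` and `Sζ`. For `p > 2` this fails for large `t`, since
`(t² + c²)^(p/2) ≥ t^(p-2) (t² + c²) = t^p + c² t^(p-2)` and `c² t^(p-2) → ∞`. -/

open Real Filter

lemma rpow_add_mul_rpow_sub_two_le {p t s : ℝ} (hp : 2 ≤ p) (ht : 0 < t) (hs : 0 ≤ s) :
    t ^ p + s * t ^ (p - 2) ≤ (t ^ 2 + s) ^ (p / 2) := by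
  have hA : 0 < t ^ 2 + s := by positivity
  calc t ^ p + s * t ^ (p - 2) = t ^ (p - 2) * (t ^ 2 + s) := by
        rw [mul_add, ← rpow_natCast t 2, ← rpow_add ht]; push_cast; ring_nf
    _ = (t ^ 2) ^ ((p - 2) / 2) * (t ^ 2 + s) := by
        rw [← rpow_natCast_mul ht.le]; push_cast; ring_nf
    _ ≤ (t ^ 2 + s) ^ ((p - 2) / 2) * (t ^ 2 + s) := by
        gcongr
        linarith
    _ = (t ^ 2 + s) ^ (p / 2) := by rw [← rpow_add_one hA.ne']; ring_nf

lemma exists_rpow_add_one_rpow_inv_lt_sqrt {p c : ℝ} (hp : 2 < p) (hc : c ≠ 0) :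
    ∃ t > 0, (t ^ p + 1) ^ (1 / p) < √(t ^ 2 + c ^ 2) := by
  obtain ⟨t, hct, ht⟩ : ∃ t, 1 < c ^ 2 * t ^ (p - 2) ∧ 0 < t :=
    ((((tendsto_rpow_atTop (by linarith)).const_mul_atTop (by positivity)).eventually_gt_atTop
      1).and (eventually_gt_atTop 0)).exists
  refine ⟨t, ht, ?_⟩
  have hp0 : 0 < p := by linarith
  rw [← rpow_lt_rpow_iff (by positivity) (by positivity) hp0, ← rpow_mul (by positivity),
    one_div_mul_cancel hp0.ne', rpow_one, sqrt_eq_rpow, ← rpow_mul (by positivity)]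
  calc t ^ p + 1 < t ^ p + c ^ 2 * t ^ (p - 2) := by linarith
    _ ≤ (t ^ 2 + c ^ 2) ^ (1 / 2 * p) := by
        rw [one_div_mul_eq_div]
        exact rpow_add_mul_rpow_sub_two_le hp.le ht (sq_nonneg c)

lemma norm_smul_add_smul_sq_of_inner_eq_zero {𝕜 E : Type*} [RCLike 𝕜] [NormedAddCommGroup E]
    [InnerProductSpace 𝕜 E] {x y : E} (h : inner 𝕜 x y = 0) (a b : 𝕜) :
    ‖a • x + b • y‖ ^ 2 = ‖a‖ ^ 2 * ‖x‖ ^ 2 + ‖b‖ ^ 2 * ‖y‖ ^ 2 := by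
  have hab : inner 𝕜 (a • x) (b • y) = 0 := by
    rw [inner_smul_left, inner_smul_right, h, mul_zero, mul_zero]
  rw [@norm_add_sq 𝕜, hab, map_zero, mul_zero, add_zero, norm_smul, norm_smul, mul_pow, mul_pow]

/-- For `2 < p < ∞` and `c > 0`, there are no operators `T, S` on `ℓ₂` and a unit vector
`ζ` with `‖Tζ‖ = 1`, `‖Sζ‖ = c`, `⟨Tζ, Sζ⟩ = 0` and
`‖z₁T + z₂S‖ = (|z₁|^p + |z₂|^p)^(1/p)` for all `z₁, z₂ ∈ ℂ`. -/
theorem stmt_16 (p : ℝ) (hp : 2 < p) (c : ℝ) (hc : 0 < c) :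
    ¬ ∃ (T S : H →L[ℂ] H) (ζ : H), ‖ζ‖ = 1 ∧ ‖T ζ‖ = 1 ∧ ‖S ζ‖ = c ∧
      ⟪T ζ, S ζ⟫ = 0 ∧
      ∀ z₁ z₂ : ℂ,
        ‖z₁ • T + z₂ • S‖ = (‖z₁‖ ^ p + ‖z₂‖ ^ p) ^ (1 / p) := by
  rintro ⟨T, S, ζ, hζ, hT, hS, horth, hnorm⟩
  obtain ⟨t, ht, hlt⟩ := exists_rpow_add_one_rpow_inv_lt_sqrt hp hc.ne'
  set A : H →L[ℂ] H := (t : ℂ) • T + (1 : ℂ) • S with hA_def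
  have hAζ : ‖A ζ‖ = √(t ^ 2 + c ^ 2) := by
    rw [← sqrt_sq (norm_nonneg _), hA_def, add_apply, smul_apply, smul_apply,
      norm_smul_add_smul_sq_of_inner_eq_zero horth, hT, hS]
    simp [abs_of_pos ht]
  have hA : ‖A‖ = (t ^ p + 1) ^ (1 / p) := by
    rw [hA_def, hnorm]
    simp [abs_of_pos ht]
  have := A.le_opNorm ζ
  rw [hAζ, hA, hζ, mul_one] at this
  exact hlt.not_ge this
end
end
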